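/- Let G be a simple graph on n vertices with maximum degree at most d, let δ > 0, and let S₁, S₂ be disjoint nonempty subsets of V with cut conductance φ_G(Sᵢ) < δ for i = 1, 2 and |S₁| + |S₂| ≤ 2n/3. Let Π be the orthogonal projection onto the span of the eigenvectors of the lazy random walk matrix M with eigenvalue greater than 1 − 4δ. Let 0 < θ ≤ 1/48 and for i = 1, 2 let Tᵢ ⊆ Sᵢ be nonempty with |Tᵢ| ≥ (1 − θ)|Sᵢ|. Then for every α ∈ [0, 1] and every β ∈ {1 − α, −(1 − α)}, ‖αΠq_{T₁}⁰ + βΠq_{T₂}⁰‖ ≥ (1/√12 − 2√θ)/√(|S₁| + |S₂|); in particular, for every ε < (1/√12 − 2√θ)/√(|S₁| + |S₂|), the vectors Πq_{T₁}⁰ and Πq_{T₂}⁰ are ε-far from collinear. -/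

import Mathlib

open scoped RealInnerProductSpace

open scoped Classical in
/-- The lazy random walk matrix of a graph `G` with degree parameter `d`. -/
noncomputable def lazyWalk {n : ℕ} (G : SimpleGraph (Fin n)) (d : ℕ) :
    Matrix (Fin n) (Fin n) ℝ :=
  Matrix.of fun u v =>
    if u = v then 1 - ((G.neighborSet u).ncard : ℝ) / (2 * d)
    else if G.Adj u v then 1 / (2 * d) else 0

/-- `G` has maximum degree at most `d`. -/
def MaxDegreeLE {n : ℕ} (G : SimpleGraph (Fin n)) (d : ℕ) : Prop :=
  ∀ v, (G.neighborSet v).ncard ≤ d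

/-- `p_u^t`: the endpoint distribution of a length-`t` lazy random walk from `u`. -/
noncomputable def pvec {n : ℕ} (G : SimpleGraph (Fin n)) (d t : ℕ) (u : Fin n) :
    EuclideanSpace ℝ (Fin n) :=
  WithLp.toLp 2 fun v => ((lazyWalk G d ^ t).mulVec fun w => if w = u then 1 else 0) v

/-- `q_u^t = p_u^t - (1/n) 𝟙`. -/
noncomputable def qvec {n : ℕ} (G : SimpleGraph (Fin n)) (d t : ℕ) (u : Fin n) :
    EuclideanSpace ℝ (Fin n) :=
  WithLp.toLp 2 fun v => pvec G d t u v - 1 / n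

/-- `q_u^0 = 1_u - (1/n) 𝟙`. -/
noncomputable def qzero {n : ℕ} (u : Fin n) : EuclideanSpace ℝ (Fin n) :=
  WithLp.toLp 2 fun v : Fin n => ((if v = u then 1 else 0) - 1 / n : ℝ)

/-- average of `q_u^0` over `u ∈ S`. -/
noncomputable def qavg {n : ℕ} (S : Finset (Fin n)) : EuclideanSpace ℝ (Fin n) :=
  (S.card : ℝ)⁻¹ • ∑ u ∈ S, qzero u

/-- `a` and `b` are `ε`-close to collinear. -/
def CloseCollinear {E : Type*} [NormedAddCommGroup E] [NormedSpace ℝ E]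
    (ε : ℝ) (a b : E) : Prop :=
  ∃ (ea eb w : E) (s s' : ℝ),
    ‖ea‖ ≤ ε ∧ ‖eb‖ ≤ ε ∧ a + ea = s • w ∧ b + eb = s' • w

/-- `a` and `b` are `ε`-close to antipodal. -/
def CloseAntipodal {E : Type*} [NormedAddCommGroup E] [NormedSpace ℝ E]
    (ε : ℝ) (a b : E) : Prop :=
  ∃ (ea eb w : E) (s s' : ℝ), 0 ≤ s ∧ 0 ≤ s' ∧
    ‖ea‖ ≤ ε ∧ ‖eb‖ ≤ ε ∧ a + ea = s • w ∧ b + eb = -(s' • w)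

/-- `a` and `b` are `ε`-close to podal. -/
def ClosePodal {E : Type*} [NormedAddCommGroup E] [NormedSpace ℝ E]
    (ε : ℝ) (a b : E) : Prop :=
  ∃ (ea eb w : E) (s s' : ℝ), 0 ≤ s ∧ 0 ≤ s' ∧
    ‖ea‖ ≤ ε ∧ ‖eb‖ ≤ ε ∧ a + ea = s • w ∧ b + eb = s' • w

/-- The Gram matrix `A_{u,v}` of two vectors. -/
noncomputable def gram2 {n : ℕ} (a b : EuclideanSpace ℝ (Fin n)) :
    Matrix (Fin 2) (Fin 2) ℝ :=
  !![‖a‖ ^ 2, ⟪a, b⟫; ⟪b, a⟫, ‖b‖ ^ 2]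

/-- Number of edges of `G` between `S` and `C \ S` (for `S ⊆ C`). -/
noncomputable def cutEdgesIn {n : ℕ} (G : SimpleGraph (Fin n)) (C S : Finset (Fin n)) : ℕ :=
  {p : Fin n × Fin n | p.1 ∈ S ∧ p.2 ∈ C ∧ p.2 ∉ S ∧ G.Adj p.1 p.2}.ncard

/-- Number of edges of `G` between `S` and its complement. -/
noncomputable def cutEdges {n : ℕ} (G : SimpleGraph (Fin n)) (S : Finset (Fin n)) : ℕ :=
  cutEdgesIn G Finset.univ S

/-- The cut conductance `φ_G(S) = e(S, V∖S) / (d|S|)`. -/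
noncomputable def cutCond {n : ℕ} (G : SimpleGraph (Fin n)) (d : ℕ) (S : Finset (Fin n)) : ℝ :=
  (cutEdges G S : ℝ) / (d * S.card)

/-- The (inner) conductance of the induced subgraph `G[C]` is at least `φ`. -/
def InnerConductanceGE {n : ℕ} (G : SimpleGraph (Fin n)) (d : ℕ) (C : Finset (Fin n))
    (φ : ℝ) : Prop :=
  ∀ S ⊆ C, S.Nonempty → 2 * S.card ≤ C.card →
    φ ≤ (cutEdgesIn G C S : ℝ) / (d * S.card)

/-- `G` is `(2, φ)`-clusterable. -/
def Clusterable2 {n : ℕ} (G : SimpleGraph (Fin n)) (d : ℕ) (φ : ℝ) : Prop :=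
  InnerConductanceGE G d Finset.univ φ ∨
  ∃ C₁ C₂ : Finset (Fin n), C₁.Nonempty ∧ C₂.Nonempty ∧ Disjoint C₁ C₂ ∧
    C₁ ∪ C₂ = Finset.univ ∧ InnerConductanceGE G d C₁ φ ∧ InnerConductanceGE G d C₂ φ

/-- `G` is `ε`-far from `(2, φ)`-clusterable. -/
def FarFromClusterable2 {n : ℕ} (G : SimpleGraph (Fin n)) (d : ℕ) (ε φ : ℝ) : Prop :=
  ∀ G' : SimpleGraph (Fin n), MaxDegreeLE G' d →
    ((symmDiff G.edgeSet G'.edgeSet).ncard : ℝ) ≤ ε * d * n →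
    ¬ Clusterable2 G' d φ

/-- The span of the eigenvectors of `M` with eigenvalue greater than `c`. -/
noncomputable def heavySpace {n : ℕ} (M : Matrix (Fin n) (Fin n) ℝ) (c : ℝ) :
    Submodule ℝ (EuclideanSpace ℝ (Fin n)) :=
  ⨆ μ : {μ : ℝ // c < μ}, Module.End.eigenspace (Matrix.toEuclideanLin M) (μ : ℝ)

/-- Orthogonal projection onto the span of the eigenvectors of `M` with eigenvalue
greater than `c`. -/
noncomputable def heavyProj {n : ℕ} (M : Matrix (Fin n) (Fin n) ℝ) (c : ℝ)
    (x : EuclideanSpace ℝ (Fin n)) : EuclideanSpace ℝ (Fin n) :=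
  (Submodule.orthogonalProjection (heavySpace M c) x : EuclideanSpace ℝ (Fin n))

/-!
Since the eigenvalues of `M` are at most `1`, `4δ ‖x - Π x‖² ≤ ‖x‖² - ⟪x, M x⟫`, and for
`x = q_S⁰` the right side is the Laplacian form `e(S, V∖S) / (2d|S|²) < δ / (2|S|)`; hence
`‖q_S⁰ - Π q_S⁰‖² ≤ 1 / (8|S|)`. For disjoint `S₁, S₂` the vectors `q_{Sᵢ}⁰` are almost orthogonal,
so `y = α q_{S₁}⁰ + β q_{S₂}⁰` is long and, by Pythagoras, so is `Π y`. Passing from `Sᵢ` to `Tᵢ`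
moves `q⁰` by at most `√(θ / ((1-θ)|Sᵢ|))`; both this error and `‖Π y‖` are governed by
`α/√|S₁| + (1-α)/√|S₂|`, and an elementary inequality shows that the error is absorbed.
If `Π q_{T₁}⁰, Π q_{T₂}⁰` were `ε`-close to a line `ℝ w`, the combination cancelling `w` would have
norm at most `ε`.
-/

namespace LinearMap.IsSymmetric

variable {E : Type*} [NormedAddCommGroup E] [InnerProductSpace ℝ E] [FiniteDimensional ℝ E]
  {T : E →ₗ[ℝ] E}

theorem eigenvalues_le_one (hT : T.IsSymmetric) (hT1 : ∀ z, ⟪z, T z⟫ ≤ ‖z‖ ^ 2) {m : ℕ}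
    (hm : Module.finrank ℝ E = m) (i : Fin m) : hT.eigenvalues hm i ≤ 1 := by
  have := hT1 (hT.eigenvectorBasis hm i)
  rwa [hT.apply_eigenvectorBasis, real_inner_smul_right, real_inner_self_eq_norm_sq,
    (hT.eigenvectorBasis hm).orthonormal.1 i, one_pow, mul_one] at this

open Module.End in
theorem mul_norm_sub_starProjection_sq_le (hT : T.IsSymmetric) (hT1 : ∀ z, ⟪z, T z⟫ ≤ ‖z‖ ^ 2)
    (c : ℝ) (x : E) :
    (1 - c) * ‖x - (⨆ μ : {μ : ℝ // c < μ}, eigenspace T μ).starProjection x‖ ^ 2 ≤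
      ‖x‖ ^ 2 - ⟪x, T x⟫ := by
  set K := ⨆ μ : {μ : ℝ // c < μ}, eigenspace T μ
  rcases lt_or_ge 1 c with hc | hc
  · nlinarith [hT1 x, sq_nonneg ‖x - K.starProjection x‖]
  set B := hT.eigenvectorBasis rfl
  set μ := hT.eigenvalues rfl
  set b := fun i => B.repr x i
  -- Instead of computing the projection, compare with the part `w` of `x` on eigenvalues `> c`:
  -- it lies in `K`, so `‖x - K.starProjection x‖ ≤ ‖x - w‖`.
  set w := ∑ i, (if c < μ i then b i else 0) • B i
  have hw : w ∈ K := by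
    refine Submodule.sum_mem _ fun i _ => ?_
    split_ifs with h
    · exact Submodule.smul_mem _ _ <|
        Submodule.mem_iSup_of_mem ⟨μ i, h⟩ (hT.hasEigenvector_eigenvectorBasis rfl i).1
    · simp
  have hxw : B.repr (x - w) = WithLp.toLp 2 fun i => if c < μ i then 0 else b i := by
    ext i
    simp only [w, map_sub, map_sum, map_smul, B.repr_self]
    simp only [PiLp.sub_apply, WithLp.ofLp_sum, Finset.sum_apply, PiLp.smul_apply,
      PiLp.single_apply, smul_eq_mul, mul_ite, mul_one, mul_zero]
    split_ifs <;> simp [b, *]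
  have hTx : ‖x‖ ^ 2 - ⟪x, T x⟫ = ∑ i, (1 - μ i) * b i ^ 2 := by
    rw [← B.repr.norm_map, ← B.repr.inner_map_map, EuclideanSpace.norm_sq_eq,
      EuclideanSpace.inner_eq_star_dotProduct]
    simp only [dotProduct, star_trivial, b, μ, B, hT.eigenvectorBasis_apply_self_apply]
    rw [← Finset.sum_sub_distrib]
    refine Finset.sum_congr rfl fun i _ => ?_
    simp
    ring
  calc (1 - c) * ‖x - K.starProjection x‖ ^ 2
      ≤ (1 - c) * ‖x - w‖ ^ 2 := by
        gcongr
        rw [Submodule.starProjection_minimal]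
        exact ciInf_le ⟨0, by rintro _ ⟨y, rfl⟩; positivity⟩ (⟨w, hw⟩ : K)
    _ = ∑ i, (1 - c) * (if c < μ i then 0 else b i) ^ 2 := by
        rw [← B.repr.norm_map, hxw, EuclideanSpace.norm_sq_eq, Finset.mul_sum]
        simp
    _ ≤ ∑ i, (1 - μ i) * b i ^ 2 := by
        refine Finset.sum_le_sum fun i _ => ?_
        split_ifs with h
        · nlinarith [hT.eigenvalues_le_one hT1 rfl i, sq_nonneg (b i)]
        · nlinarith [sq_nonneg (b i)]
    _ = _ := hTx.symm

end LinearMap.IsSymmetric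

theorem norm_smul_add_smul_le {E : Type*} [SeminormedAddCommGroup E] [NormedSpace ℝ E]
    {α β : ℝ} (hα : 0 ≤ α) (hβ : |β| = 1 - α) (x y : E) :
    ‖α • x + β • y‖ ≤ α * ‖x‖ + (1 - α) * ‖y‖ := by
  simpa [norm_smul, abs_of_nonneg hα, hβ] using norm_add_le (α • x) (β • y)

theorem exists_balanced_combination (s s' : ℝ) :
    ∃ α β : ℝ, 0 ≤ α ∧ α ≤ 1 ∧ |β| = 1 - α ∧ α * s + β * s' = 0 := by
  rcases eq_or_ne s' 0 with rfl | hs'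
  · exact ⟨0, 1, le_rfl, zero_le_one, by simp, by simp⟩
  have hD : 0 < |s| + |s'| := by positivity
  refine ⟨|s'| / (|s| + |s'|), -(|s'| / (|s| + |s'|) * s / s'), by positivity,
    div_le_one_of_le₀ (by linarith [abs_nonneg s]) hD.le, ?_, by field_simp; ring⟩
  rw [abs_neg, abs_div, abs_mul, abs_div, abs_of_pos hD, abs_abs]
  field_simp
  ring

theorem not_closeCollinear_of_le_norm {E : Type*} [NormedAddCommGroup E] [NormedSpace ℝ E]
    {a b : E} {L : ℝ}
    (h : ∀ α β : ℝ, 0 ≤ α → α ≤ 1 → (β = 1 - α ∨ β = -(1 - α)) → L ≤ ‖α • a + β • b‖)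
    {ε : ℝ} (hε : ε < L) : ¬ CloseCollinear ε a b := by
  rintro ⟨ea, eb, w, s, s', hea, heb, ha, hb⟩
  obtain ⟨α, β, hα0, hα1, hβ, hαβ⟩ := exists_balanced_combination s s'
  have hcancel : α • a + β • b = -(α • ea + β • eb) :=
    calc α • a + β • b = (α * s + β * s') • w - (α • ea + β • eb) := by
          rw [eq_sub_of_add_eq ha, eq_sub_of_add_eq hb]; module
      _ = -(α • ea + β • eb) := by rw [hαβ, zero_smul, zero_sub]
  have hL := h α β hα0 hα1 ((abs_eq (by linarith)).mp hβ)
  rw [hcancel, norm_neg] at hL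
  have := norm_smul_add_smul_le hα0 hβ ea eb
  nlinarith [mul_le_mul_of_nonneg_left hea hα0, mul_le_mul_of_nonneg_left heb (sub_nonneg.2 hα1)]

theorem sub_add_mul_le_sqrt {θ u Q : ℝ} (hθ : θ ≤ 1 / 48) (hQu : u ^ 2 ≤ 2 * Q)
    (hQ : 1 ≤ Q) :
    1 / √12 - 2 * √θ + √(θ / (1 - θ)) * u ≤ √(Q - 2 / 3 - u ^ 2 / 8) := by
  set a := √θ
  set b := √(1 - θ)
  set m := √(1 / 48)
  have hb0 : 0 < b := Real.sqrt_pos.mpr (by linarith)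
  have hb2 : b ^ 2 = 1 - θ := Real.sq_sqrt (by linarith)
  have hm2 : m ^ 2 = 1 / 48 := Real.sq_sqrt (by norm_num)
  have hm : 1 / √12 = 2 * m := by
    rw [← sq_eq_sq₀ (by positivity) (by positivity), div_pow, mul_pow, hm2,
      Real.sq_sqrt (by norm_num)]
    norm_num
  have hRHS : 1 / 12 ≤ Q - 2 / 3 - u ^ 2 / 8 := by
    rcases le_total (u ^ 2) 2 with h | h <;> nlinarith
  rw [Real.sqrt_div' θ (by linarith : 0 ≤ 1 - θ)]
  -- For `u ≥ 2 √(1 - θ)` the left side increases with `√θ ≤ m`, and at `√θ = m` it is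
  -- `m u / √(1 - θ)` because `1 / √12 = 2 m`.
  rcases le_total u (2 * b) with hub | hub
  · calc 1 / √12 - 2 * a + a / b * u
        ≤ 1 / √12 := by
          have : a / b * u ≤ 2 * a := by
            rw [div_mul_eq_mul_div, div_le_iff₀ hb0]
            nlinarith [Real.sqrt_nonneg θ]
          linarith
      _ = √(1 / 12) := by rw [Real.sqrt_div' 1 (by norm_num), Real.sqrt_one]
      _ ≤ √(Q - 2 / 3 - u ^ 2 / 8) := Real.sqrt_le_sqrt hRHS
  · have ham : a ≤ m := Real.sqrt_le_sqrt hθ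
    have hub' : 0 ≤ u / b - 2 := by rw [sub_nonneg, le_div_iff₀ hb0]; linarith
    calc 1 / √12 - 2 * a + a / b * u
        = 2 * m + a * (u / b - 2) := by rw [hm]; ring
      _ ≤ 2 * m + m * (u / b - 2) := by gcongr
      _ = m * u / b := by ring
      _ ≤ |m * u / b| := le_abs_self _
      _ ≤ √(Q - 2 / 3 - u ^ 2 / 8) := by
          refine Real.abs_le_sqrt ?_
          rw [div_pow, mul_pow, hm2, hb2, div_le_iff₀ (by linarith)]
          nlinarith

theorem div_sqrt_add_mul_le_sqrt {θ σ A B : ℝ} (hθ : θ ≤ 1 / 48) (hσ : 0 < σ)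
    (hAB : 1 / σ ≤ A ^ 2 + B ^ 2) :
    (1 / √12 - 2 * √θ) / √σ + √(θ / (1 - θ)) * (A + B) ≤
      √(A ^ 2 + B ^ 2 - 2 / (3 * σ) - (A + B) ^ 2 / 8) := by
  have hrσ : 0 < √σ := Real.sqrt_pos.mpr hσ
  have key := sub_add_mul_le_sqrt (u := (A + B) * √σ) (Q := σ * (A ^ 2 + B ^ 2)) hθ
    (by rw [mul_pow, Real.sq_sqrt hσ.le]; nlinarith [sq_nonneg (A - B)])
    (by rwa [div_le_iff₀ hσ, mul_comm] at hAB)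
  have hRHS : A ^ 2 + B ^ 2 - 2 / (3 * σ) - (A + B) ^ 2 / 8 =
      (σ * (A ^ 2 + B ^ 2) - 2 / 3 - ((A + B) * √σ) ^ 2 / 8) / σ := by
    rw [mul_pow, Real.sq_sqrt hσ.le]; field_simp
  rw [hRHS, Real.sqrt_div' _ hσ.le, le_div_iff₀ hrσ]
  calc ((1 / √12 - 2 * √θ) / √σ + √(θ / (1 - θ)) * (A + B)) * √σ
      = 1 / √12 - 2 * √θ + √(θ / (1 - θ)) * ((A + B) * √σ) := by field_simp
    _ ≤ _ := key

namespace SimpleGraph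

variable {n : ℕ} (G : SimpleGraph (Fin n)) (d : ℕ)

open scoped Classical in
theorem lazyWalk_eq_one_sub_lapMatrix :
    lazyWalk G d = 1 - (2 * d : ℝ)⁻¹ • G.lapMatrix ℝ := by
  ext u v
  rw [lazyWalk, Matrix.of_apply, lapMatrix, degMatrix, Matrix.sub_apply, Matrix.smul_apply,
    Matrix.sub_apply, Matrix.one_apply, Matrix.diagonal_apply, adjMatrix_apply]
  rcases eq_or_ne u v with rfl | h
  · have hdeg : (G.neighborSet u).ncard = G.degree u := by
      rw [← Nat.card_coe_set_eq, Nat.card_eq_fintype_card, card_neighborSet_eq_degree]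
    simp [hdeg, div_eq_inv_mul]
  · by_cases hadj : G.Adj u v <;> simp [h, hadj, div_eq_inv_mul]

theorem isHermitian_lazyWalk : (lazyWalk G d).IsHermitian := by
  classical
  rw [lazyWalk_eq_one_sub_lapMatrix]
  exact Matrix.isHermitian_one.sub ((G.isHermitian_lapMatrix ℝ).smul (by simp [IsSelfAdjoint]))

open scoped Classical in
theorem norm_sq_sub_inner_lazyWalk (x : EuclideanSpace ℝ (Fin n)) :
    ‖x‖ ^ 2 - ⟪x, Matrix.toEuclideanLin (lazyWalk G d) x⟫ =
      (∑ i, ∑ j, if G.Adj i j then (x i - x j) ^ 2 else 0) / (4 * d) := by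
  have := G.lapMatrix_toLinearMap₂' ℝ x
  rw [Matrix.toLinearMap₂'_apply'] at this
  rw [lazyWalk_eq_one_sub_lapMatrix, Matrix.toLpLin_apply, EuclideanSpace.inner_eq_star_dotProduct,
    ← real_inner_self_eq_norm_sq, EuclideanSpace.inner_eq_star_dotProduct]
  simp only [star_trivial, Matrix.sub_mulVec, Matrix.one_mulVec, Matrix.smul_mulVec] at this ⊢
  rw [dotProduct_comm] at this
  rw [sub_dotProduct, smul_dotProduct, this, smul_eq_mul]
  ring

theorem inner_lazyWalk_le (x : EuclideanSpace ℝ (Fin n)) :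
    ⟪x, Matrix.toEuclideanLin (lazyWalk G d) x⟫ ≤ ‖x‖ ^ 2 := by
  rw [← sub_nonneg, G.norm_sq_sub_inner_lazyWalk]
  refine div_nonneg (Finset.sum_nonneg fun i _ => Finset.sum_nonneg fun j _ => ?_) (by positivity)
  split_ifs <;> positivity

end SimpleGraph

section qavg

variable {n : ℕ} {S S' : Finset (Fin n)}

open scoped Classical in
theorem qavg_apply (hS : S.Nonempty) (v : Fin n) :
    qavg S v = (if v ∈ S then (S.card : ℝ)⁻¹ else 0) - 1 / n := by
  have hS0 : (S.card : ℝ) ≠ 0 := by exact_mod_cast hS.card_pos.ne'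
  simp only [qavg, qzero, PiLp.smul_apply, WithLp.ofLp_sum, Finset.sum_apply, smul_eq_mul,
    Finset.sum_sub_distrib, Finset.sum_ite_eq, Finset.sum_const, nsmul_eq_mul]
  split_ifs
  · field_simp
  · field_simp; ring

theorem inner_qavg (hS : S.Nonempty) (hS' : S'.Nonempty) :
    ⟪qavg S, qavg S'⟫ = ((S ∩ S').card : ℝ) / (S.card * S'.card) - 1 / n := by
  classical
  have hn : (n : ℝ) ≠ 0 := by obtain ⟨v, -⟩ := hS; exact_mod_cast v.pos.ne'
  have hS0 : (S.card : ℝ) ≠ 0 := by exact_mod_cast hS.card_pos.ne'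
  have hS0' : (S'.card : ℝ) ≠ 0 := by exact_mod_cast hS'.card_pos.ne'
  have hterm (v : Fin n) : qavg S v * qavg S' v =
      (if v ∈ S ∩ S' then (S.card * S'.card : ℝ)⁻¹ else 0)
        - (if v ∈ S then (S.card : ℝ)⁻¹ else 0) / n
        - (if v ∈ S' then (S'.card : ℝ)⁻¹ else 0) / n + 1 / n ^ 2 := by
    rw [qavg_apply hS, qavg_apply hS']
    by_cases h : v ∈ S <;> by_cases h' : v ∈ S' <;> simp [h, h'] <;> field_simp <;> ring
  simp only [PiLp.inner_apply, RCLike.inner_apply, conj_trivial, mul_comm (qavg S' _), hterm,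
    Finset.sum_add_distrib, Finset.sum_sub_distrib, ← Finset.sum_div, Finset.sum_ite_mem,
    Finset.univ_inter, Finset.sum_const, nsmul_eq_mul, Finset.card_univ, Fintype.card_fin]
  field_simp
  ring

open scoped Classical in
theorem cutEdges_eq_sum (G : SimpleGraph (Fin n)) :
    (cutEdges G S : ℝ) = ∑ v, ∑ u, if v ∈ S ∧ u ∉ S ∧ G.Adj v u then 1 else 0 := by
  rw [← Finset.sum_product', Finset.sum_boole, cutEdges, cutEdgesIn, ← Set.ncard_coe_finset]
  congr 2
  ext
  simp

open scoped Classical in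
theorem sum_adj_qavg_sub_sq (G : SimpleGraph (Fin n)) (hS : S.Nonempty) :
    (∑ v, ∑ u, if G.Adj v u then (qavg S v - qavg S u) ^ 2 else 0) =
      2 * cutEdges G S / (S.card : ℝ) ^ 2 := by
  have hterm (v u : Fin n) : (if G.Adj v u then (qavg S v - qavg S u) ^ 2 else 0) =
      ((S.card : ℝ)⁻¹) ^ 2 * ((if v ∈ S ∧ u ∉ S ∧ G.Adj v u then 1 else 0) +
        (if u ∈ S ∧ v ∉ S ∧ G.Adj u v then 1 else 0)) := by
    rw [qavg_apply hS, qavg_apply hS]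
    by_cases ha : G.Adj v u
    · by_cases h1 : v ∈ S <;> by_cases h2 : u ∈ S <;> simp [ha, ha.symm, h1, h2]; ring
    · simp [ha, G.adj_comm u v]
  simp only [hterm, ← Finset.mul_sum, Finset.sum_add_distrib]
  rw [Finset.sum_comm (f := fun v u => if u ∈ S ∧ v ∉ S ∧ G.Adj u v then (1 : ℝ) else 0),
    ← cutEdges_eq_sum]
  ring

theorem norm_smul_qavg_add_smul_qavg_sq (hS : S.Nonempty) (hS' : S'.Nonempty)
    (hdisj : Disjoint S S') (α β : ℝ) :
    ‖α • qavg S + β • qavg S'‖ ^ 2 = α ^ 2 / S.card + β ^ 2 / S'.card - (α + β) ^ 2 / n := by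
  have hS0 : (S.card : ℝ) ≠ 0 := by exact_mod_cast hS.card_pos.ne'
  have hS0' : (S'.card : ℝ) ≠ 0 := by exact_mod_cast hS'.card_pos.ne'
  rw [norm_add_sq_real, norm_smul, norm_smul, real_inner_smul_left, real_inner_smul_right,
    mul_pow, mul_pow, Real.norm_eq_abs, Real.norm_eq_abs, sq_abs, sq_abs,
    ← real_inner_self_eq_norm_sq, ← real_inner_self_eq_norm_sq, inner_qavg hS hS,
    inner_qavg hS hS', inner_qavg hS' hS', Finset.inter_self, Finset.inter_self,
    Finset.disjoint_iff_inter_eq_empty.mp hdisj, Finset.card_empty]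
  field_simp
  ring

theorem norm_qavg_sub_qavg_le {T : Finset (Fin n)} {θ : ℝ} (hT : T.Nonempty) (hTS : T ⊆ S)
    (hθ : θ < 1) (hcard : (1 - θ) * S.card ≤ T.card) :
    ‖qavg T - qavg S‖ ≤ √(θ / (1 - θ)) / √S.card := by
  have hS : S.Nonempty := hT.mono hTS
  have ht : (0 : ℝ) < T.card := by exact_mod_cast hT.card_pos
  have hs : (0 : ℝ) < S.card := by exact_mod_cast hS.card_pos
  have hsq : ‖qavg T - qavg S‖ ^ 2 = 1 / T.card - 1 / S.card := by
    rw [norm_sub_sq_real, ← real_inner_self_eq_norm_sq, ← real_inner_self_eq_norm_sq,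
      inner_qavg hT hT, inner_qavg hT hS, inner_qavg hS hS, Finset.inter_self, Finset.inter_self,
      Finset.inter_eq_left.mpr hTS]
    field_simp
    ring
  rw [← Real.sqrt_div' _ hs.le, ← Real.sqrt_sq (norm_nonneg _), hsq]
  refine Real.sqrt_le_sqrt ?_
  have h1θ : 0 < 1 - θ := by linarith
  calc 1 / (T.card : ℝ) - 1 / S.card ≤ 1 / ((1 - θ) * S.card) - 1 / S.card := by
        gcongr
    _ = θ / (1 - θ) / S.card := by field_simp; ring

end qavg

theorem heavyProj_apply {n : ℕ} (M : Matrix (Fin n) (Fin n) ℝ) (c : ℝ)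
    (x : EuclideanSpace ℝ (Fin n)) : heavyProj M c x = (heavySpace M c).starProjection x :=
  rfl

theorem norm_qavg_sub_heavyProj_le {n d : ℕ} {G : SimpleGraph (Fin n)} {δ : ℝ}
    {S : Finset (Fin n)} (hδ : 0 < δ) (hS : S.Nonempty) (hcut : cutCond G d S < δ) :
    ‖qavg S - heavyProj (lazyWalk G d) (1 - 4 * δ) (qavg S)‖ ≤ 1 / (√8 * √S.card) := by
  classical
  have hs : (0 : ℝ) < S.card := by exact_mod_cast hS.card_pos
  have hspec := (Matrix.isSymmetric_toEuclideanLin_iff.mpr (G.isHermitian_lazyWalk d))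
    |>.mul_norm_sub_starProjection_sq_le (G.inner_lazyWalk_le d) (1 - 4 * δ) (qavg S)
  have hform : 2 * cutEdges G S / (S.card : ℝ) ^ 2 / (4 * d) = cutCond G d S / (2 * S.card) := by
    rw [cutCond]; ring
  rw [G.norm_sq_sub_inner_lazyWalk, sum_adj_qavg_sub_sq G hS, hform] at hspec
  refine le_of_pow_le_pow_left₀ two_ne_zero (by positivity) ?_
  refine le_of_mul_le_mul_left ?_ (by positivity : 0 < 4 * δ)
  calc 4 * δ * ‖qavg S - heavyProj (lazyWalk G d) (1 - 4 * δ) (qavg S)‖ ^ 2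
      ≤ cutCond G d S / (2 * S.card) := by rw [heavyProj_apply, heavySpace]; linarith
    _ ≤ δ / (2 * S.card) := by gcongr
    _ = 4 * δ * (1 / (√8 * √S.card)) ^ 2 := by
        rw [div_pow, mul_pow, Real.sq_sqrt (by norm_num), Real.sq_sqrt hs.le]
        field_simp
        ring

theorem le_norm_heavyProj_smul_qavg_add_smul_sq {n d : ℕ} {G : SimpleGraph (Fin n)} {δ α β : ℝ}
    {S₁ S₂ : Finset (Fin n)} (hδ : 0 < δ) (h1 : S₁.Nonempty) (h2 : S₂.Nonempty)
    (hdisj : Disjoint S₁ S₂) (hc1 : cutCond G d S₁ < δ) (hc2 : cutCond G d S₂ < δ)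
    (hsize : (S₁.card + S₂.card : ℝ) ≤ 2 * n / 3) (hα0 : 0 ≤ α) (hα1 : α ≤ 1)
    (hβ : |β| = 1 - α) :
    (α / √S₁.card) ^ 2 + ((1 - α) / √S₂.card) ^ 2 - 2 / (3 * (S₁.card + S₂.card)) -
        (α / √S₁.card + (1 - α) / √S₂.card) ^ 2 / 8 ≤
      ‖heavyProj (lazyWalk G d) (1 - 4 * δ) (α • qavg S₁ + β • qavg S₂)‖ ^ 2 := by
  set P := (heavySpace (lazyWalk G d) (1 - 4 * δ)).starProjection
  set y := α • qavg S₁ + β • qavg S₂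
  have hs1 : (0 : ℝ) < S₁.card := by exact_mod_cast h1.card_pos
  have hs2 : (0 : ℝ) < S₂.card := by exact_mod_cast h2.card_pos
  have hn : (0 : ℝ) < n := by obtain ⟨v, -⟩ := h1; exact_mod_cast v.pos
  have hy : (α / √S₁.card) ^ 2 + ((1 - α) / √S₂.card) ^ 2 - 2 / (3 * (S₁.card + S₂.card)) ≤
      ‖y‖ ^ 2 := by
    have hαβ : (α + β) ^ 2 ≤ 1 := by
      rcases (abs_eq (by linarith)).mp hβ with rfl | rfl <;> nlinarith
    have hn' : 1 / (n : ℝ) ≤ 2 / (3 * (S₁.card + S₂.card)) := by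
      rw [div_le_div_iff₀ hn (by positivity)]; linarith
    rw [norm_smul_qavg_add_smul_qavg_sq h1 h2 hdisj, div_pow, div_pow, Real.sq_sqrt hs1.le,
      Real.sq_sqrt hs2.le, ← sq_abs β, hβ]
    have : (α + β) ^ 2 / n ≤ 1 / n := by gcongr
    linarith
  have hyP : ‖y - P y‖ ≤ (α / √S₁.card + (1 - α) / √S₂.card) / √8 := by
    have hsplit : y - P y = α • (qavg S₁ - P (qavg S₁)) + β • (qavg S₂ - P (qavg S₂)) := by
      simp only [y, map_add, map_smul]; module
    rw [hsplit]
    refine (norm_smul_add_smul_le hα0 hβ _ _).trans ?_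
    have e1 := norm_qavg_sub_heavyProj_le hδ h1 hc1
    have e2 := norm_qavg_sub_heavyProj_le hδ h2 hc2
    rw [heavyProj_apply] at e1 e2
    calc α * ‖qavg S₁ - P (qavg S₁)‖ + (1 - α) * ‖qavg S₂ - P (qavg S₂)‖
        ≤ α * (1 / (√8 * √S₁.card)) + (1 - α) * (1 / (√8 * √S₂.card)) := by
          gcongr
      _ = _ := by field_simp
  have hpyth : ‖y‖ ^ 2 = ‖P y‖ ^ 2 + ‖y - P y‖ ^ 2 := by
    rw [← Submodule.starProjection_orthogonal_val]
    exact Submodule.norm_sq_eq_add_norm_sq_starProjection y _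
  have hyP2 := pow_le_pow_left₀ (norm_nonneg _) hyP 2
  rw [div_pow, Real.sq_sqrt (by norm_num)] at hyP2
  rw [heavyProj_apply]
  linarith

theorem le_norm_smul_heavyProj_qavg_add_smul {n d : ℕ} {G : SimpleGraph (Fin n)}
    {δ θ α β : ℝ} {S₁ S₂ T₁ T₂ : Finset (Fin n)} (hδ : 0 < δ) (h1 : S₁.Nonempty)
    (h2 : S₂.Nonempty) (hdisj : Disjoint S₁ S₂) (hc1 : cutCond G d S₁ < δ)
    (hc2 : cutCond G d S₂ < δ) (hsize : (S₁.card + S₂.card : ℝ) ≤ 2 * n / 3)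
    (hθ : θ ≤ 1 / 48) (hT1 : T₁ ⊆ S₁) (hT2 : T₂ ⊆ S₂) (hT1ne : T₁.Nonempty)
    (hT2ne : T₂.Nonempty) (hT1c : (1 - θ) * S₁.card ≤ T₁.card)
    (hT2c : (1 - θ) * S₂.card ≤ T₂.card) (hα0 : 0 ≤ α) (hα1 : α ≤ 1) (hβ : |β| = 1 - α) :
    (1 / √12 - 2 * √θ) / √(S₁.card + S₂.card) ≤
      ‖α • heavyProj (lazyWalk G d) (1 - 4 * δ) (qavg T₁) +
        β • heavyProj (lazyWalk G d) (1 - 4 * δ) (qavg T₂)‖ := by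
  set P := (heavySpace (lazyWalk G d) (1 - 4 * δ)).starProjection
  set A := α / √S₁.card
  set B := (1 - α) / √S₂.card
  have hs1 : (0 : ℝ) < S₁.card := by exact_mod_cast h1.card_pos
  have hs2 : (0 : ℝ) < S₂.card := by exact_mod_cast h2.card_pos
  have hθ1 : θ < 1 := by linarith
  have hPy := le_norm_heavyProj_smul_qavg_add_smul_sq hδ h1 h2 hdisj hc1 hc2 hsize hα0 hα1 hβ
  rw [heavyProj_apply] at hPy
  simp only [heavyProj_apply]
  have hPt : ‖P (α • qavg S₁ + β • qavg S₂)‖ ≤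
      ‖α • P (qavg T₁) + β • P (qavg T₂)‖ + √(θ / (1 - θ)) * (A + B) := by
    have hsplit : P (α • qavg S₁ + β • qavg S₂) - (α • P (qavg T₁) + β • P (qavg T₂)) =
        P (α • (qavg S₁ - qavg T₁) + β • (qavg S₂ - qavg T₂)) := by
      simp only [map_add, map_smul, map_sub]; module
    have e1 := norm_qavg_sub_qavg_le hT1ne hT1 hθ1 hT1c
    have e2 := norm_qavg_sub_qavg_le hT2ne hT2 hθ1 hT2c
    rw [norm_sub_rev] at e1 e2
    calc ‖P (α • qavg S₁ + β • qavg S₂)‖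
        ≤ ‖α • P (qavg T₁) + β • P (qavg T₂)‖ +
            ‖α • (qavg S₁ - qavg T₁) + β • (qavg S₂ - qavg T₂)‖ := by
          refine (norm_le_norm_add_norm_sub' _ (α • P (qavg T₁) + β • P (qavg T₂))).trans ?_
          rw [hsplit]
          gcongr
          exact Submodule.norm_starProjection_apply_le _ _
      _ ≤ ‖α • P (qavg T₁) + β • P (qavg T₂)‖ +
            (α * (√(θ / (1 - θ)) / √S₁.card) + (1 - α) * (√(θ / (1 - θ)) / √S₂.card)) := by
          gcongr
          refine (norm_smul_add_smul_le hα0 hβ _ _).trans ?_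
          gcongr
      _ = _ := by ring
  have hAB : 1 / (S₁.card + S₂.card : ℝ) ≤ A ^ 2 + B ^ 2 := by
    rw [div_pow, div_pow, Real.sq_sqrt hs1.le, Real.sq_sqrt hs2.le, div_add_div _ _ hs1.ne' hs2.ne',
      div_le_div_iff₀ (by positivity) (by positivity)]
    nlinarith [sq_nonneg (α * S₂.card - (1 - α) * S₁.card)]
  have hscalar := div_sqrt_add_mul_le_sqrt hθ (by positivity) hAB
  have hsqrt := Real.sqrt_le_sqrt hPy
  rw [Real.sqrt_sq (norm_nonneg _)] at hsqrt
  linarith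

theorem stmt14_general {n d : ℕ} (G : SimpleGraph (Fin n))
    (δ : ℝ) (hδ : 0 < δ) (S₁ S₂ : Finset (Fin n)) (h1 : S₁.Nonempty) (h2 : S₂.Nonempty)
    (hdisj : Disjoint S₁ S₂)
    (hc1 : cutCond G d S₁ < δ) (hc2 : cutCond G d S₂ < δ)
    (hsize : (S₁.card + S₂.card : ℝ) ≤ 2 * n / 3)
    (θ : ℝ) (hθ1 : θ ≤ 1 / 48)
    (T₁ T₂ : Finset (Fin n)) (hT1 : T₁ ⊆ S₁) (hT2 : T₂ ⊆ S₂)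
    (hT1ne : T₁.Nonempty) (hT2ne : T₂.Nonempty)
    (hT1c : (1 - θ) * S₁.card ≤ T₁.card) (hT2c : (1 - θ) * S₂.card ≤ T₂.card) :
    (∀ α β : ℝ, 0 ≤ α → α ≤ 1 → (β = 1 - α ∨ β = -(1 - α)) →
      (1 / Real.sqrt 12 - 2 * Real.sqrt θ) / Real.sqrt (S₁.card + S₂.card) ≤
        ‖α • heavyProj (lazyWalk G d) (1 - 4 * δ) (qavg T₁) +
          β • heavyProj (lazyWalk G d) (1 - 4 * δ) (qavg T₂)‖) ∧
    (∀ ε : ℝ, ε < (1 / Real.sqrt 12 - 2 * Real.sqrt θ) / Real.sqrt (S₁.card + S₂.card) →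
      ¬ CloseCollinear ε (heavyProj (lazyWalk G d) (1 - 4 * δ) (qavg T₁))
        (heavyProj (lazyWalk G d) (1 - 4 * δ) (qavg T₂))) := by
  have hbound := fun α β (hα0 : 0 ≤ α) (hα1 : α ≤ 1) (hβ : β = 1 - α ∨ β = -(1 - α)) =>
    le_norm_smul_heavyProj_qavg_add_smul hδ h1 h2 hdisj hc1 hc2 hsize hθ1 hT1 hT2
      hT1ne hT2ne hT1c hT2c hα0 hα1 ((abs_eq (sub_nonneg.2 hα1)).mpr hβ)
  exact ⟨hbound, fun ε hε => not_closeCollinear_of_le_norm hbound hε⟩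

theorem stmt14 {n d : ℕ} (hd : 1 ≤ d) (G : SimpleGraph (Fin n)) (hdeg : MaxDegreeLE G d)
    (δ : ℝ) (hδ : 0 < δ) (S₁ S₂ : Finset (Fin n)) (h1 : S₁.Nonempty) (h2 : S₂.Nonempty)
    (hdisj : Disjoint S₁ S₂)
    (hc1 : cutCond G d S₁ < δ) (hc2 : cutCond G d S₂ < δ)
    (hsize : (S₁.card + S₂.card : ℝ) ≤ 2 * n / 3)
    (θ : ℝ) (hθ0 : 0 < θ) (hθ1 : θ ≤ 1 / 48)
    (T₁ T₂ : Finset (Fin n)) (hT1 : T₁ ⊆ S₁) (hT2 : T₂ ⊆ S₂)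
    (hT1ne : T₁.Nonempty) (hT2ne : T₂.Nonempty)
    (hT1c : (1 - θ) * S₁.card ≤ T₁.card) (hT2c : (1 - θ) * S₂.card ≤ T₂.card) :
    (∀ α β : ℝ, 0 ≤ α → α ≤ 1 → (β = 1 - α ∨ β = -(1 - α)) →
      (1 / Real.sqrt 12 - 2 * Real.sqrt θ) / Real.sqrt (S₁.card + S₂.card) ≤
        ‖α • heavyProj (lazyWalk G d) (1 - 4 * δ) (qavg T₁) +
          β • heavyProj (lazyWalk G d) (1 - 4 * δ) (qavg T₂)‖) ∧
    (∀ ε : ℝ, ε < (1 / Real.sqrt 12 - 2 * Real.sqrt θ) / Real.sqrt (S₁.card + S₂.card) →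
      ¬ CloseCollinear ε (heavyProj (lazyWalk G d) (1 - 4 * δ) (qavg T₁))
        (heavyProj (lazyWalk G d) (1 - 4 * δ) (qavg T₂))) :=
  stmt14_general G δ hδ S₁ S₂ h1 h2 hdisj hc1 hc2 hsize θ hθ1 T₁ T₂ hT1 hT2 hT1ne hT2ne hT1c hT2c
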